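/- Let (X,ω_X), (Y,ω_Y), (Z,ω_Z) be symplectic vector spaces, let L₁ ⊆ X × Y be a linear canonical relation from X to Y and L₂ ⊆ Y × Z a linear canonical relation from Y to Z. Then the composition L₂ ∘ L₁ = {(x,z) ∈ X × Z : ∃ y ∈ Y, (x,y) ∈ L₁ and (y,z) ∈ L₂} is a linear canonical relation from X to Z. -/

import Mathlib

/-!
The composite `R = L₂ ∘ L₁` is isotropic: the identities `ωX x x' = ωY y y'` and
`ωY y y' = ωZ z z'` coming from `L₁` and `L₂` chain through the common middle coordinate.
For the dimension, `R` is the image of the fibre product `{y = y'} ⊆ L₁ × L₂` under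
`((x, y), (y', z)) ↦ (x, z)`. Rank–nullity twice gives `dim R + dim K + dim S = dim L₁ + dim L₂`,
where `S = pr_Y L₁ + pr_Y L₂` is the image of `y - y'` and `K = {y | (0, y) ∈ L₁, (y, 0) ∈ L₂}`
is the kernel of the projection on the fibre product. Lagrangianity of `L₁` and `L₂` says exactly
that `K = S^ω`, so `dim K + dim S = dim Y` and `2 dim R = dim X + dim Z`; an isotropic subspace of
half dimension is lagrangian.
-/


open Submodule Module

def oOrtho {V : Type*} [AddCommGroup V] [Module ℝ V]
    (ω : V →ₗ[ℝ] V →ₗ[ℝ] ℝ) (W : Submodule ℝ V) : Submodule ℝ V where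
  carrier := {v | ∀ u ∈ W, ω v u = 0}
  add_mem' := by
    intro a b ha hb u hu
    rw [Set.mem_setOf_eq] at *
    rw [map_add, LinearMap.add_apply, ha u hu, hb u hu, add_zero]
  zero_mem' := by intro u _; simp
  smul_mem' := by
    intro c a ha u hu
    rw [Set.mem_setOf_eq] at *
    rw [map_smul, LinearMap.smul_apply, ha u hu, smul_zero]

def prodForm {X Y : Type*} [AddCommGroup X] [Module ℝ X] [AddCommGroup Y] [Module ℝ Y]
    (ωX : X →ₗ[ℝ] X →ₗ[ℝ] ℝ) (ωY : Y →ₗ[ℝ] Y →ₗ[ℝ] ℝ) :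
    (X × Y) →ₗ[ℝ] (X × Y) →ₗ[ℝ] ℝ :=
  LinearMap.mk₂ ℝ (fun p q => ωX p.1 q.1 - ωY p.2 q.2)
    (by intro m₁ m₂ n; simp [map_add, LinearMap.add_apply]; ring)
    (by intro c m n; simp [map_smul, LinearMap.smul_apply, smul_eq_mul]; ring)
    (by intro m n₁ n₂; simp [map_add, LinearMap.add_apply]; ring)
    (by intro c m n; simp [map_smul, LinearMap.smul_apply, smul_eq_mul]; ring)

def relComp {X Y Z : Type*} [AddCommGroup X] [Module ℝ X] [AddCommGroup Y] [Module ℝ Y]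
    [AddCommGroup Z] [Module ℝ Z]
    (L₂ : Submodule ℝ (Y × Z)) (L₁ : Submodule ℝ (X × Y)) : Submodule ℝ (X × Z) where
  carrier := {p | ∃ y : Y, (p.1, y) ∈ L₁ ∧ (y, p.2) ∈ L₂}
  add_mem' := by
    rintro a b ⟨y, h1, h2⟩ ⟨y', h1', h2'⟩
    exact ⟨y + y', L₁.add_mem h1 h1', L₂.add_mem h2 h2'⟩
  zero_mem' := ⟨0, L₁.zero_mem, L₂.zero_mem⟩
  smul_mem' := by
    rintro c a ⟨y, h1, h2⟩
    exact ⟨c • y, L₁.smul_mem c h1, L₂.smul_mem c h2⟩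

lemma finrank_map_add_finrank_inf_ker {K V W : Type*} [DivisionRing K] [AddCommGroup V]
    [Module K V] [FiniteDimensional K V] [AddCommGroup W] [Module K W]
    (f : V →ₗ[K] W) (p : Submodule K V) :
    finrank K (p.map f) + finrank K (p ⊓ LinearMap.ker f : Submodule K V) = finrank K p := by
  rw [← LinearMap.range_domRestrict, ← LinearMap.finrank_range_add_finrank_ker (f.domRestrict p),
    LinearMap.ker_domRestrict, ← Submodule.finrank_map_subtype_eq, Submodule.map_comap_subtype]

lemma finrank_submodule_prod {K V W : Type*} [DivisionRing K] [AddCommGroup V] [Module K V]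
    [AddCommGroup W] [Module K W] (p : Submodule K V) (q : Submodule K W)
    [FiniteDimensional K p] [FiniteDimensional K q] :
    finrank K (p.prod q) = finrank K p + finrank K q := by
  have h : p.prod q = LinearMap.range (p.subtype.prodMap q.subtype) := by
    rw [LinearMap.range_prodMap, p.range_subtype, q.range_subtype]
  rw [h, LinearMap.finrank_range_of_inj (p.injective_subtype.prodMap q.injective_subtype),
    Module.finrank_prod]

section Orthogonal

variable {V : Type*} [AddCommGroup V] [Module ℝ V]

@[simp]
lemma mem_oOrtho {ω : V →ₗ[ℝ] V →ₗ[ℝ] ℝ} {W : Submodule ℝ V} {v : V} :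
    v ∈ oOrtho ω W ↔ ∀ u ∈ W, ω v u = 0 :=
  Iff.rfl

lemma oOrtho_sup (ω : V →ₗ[ℝ] V →ₗ[ℝ] ℝ) (W W' : Submodule ℝ V) :
    oOrtho ω (W ⊔ W') = oOrtho ω W ⊓ oOrtho ω W' := by
  ext v
  simp only [mem_oOrtho, mem_inf, mem_sup]
  constructor
  · intro h
    exact ⟨fun u hu ↦ h u ⟨u, hu, 0, W'.zero_mem, add_zero u⟩,
      fun u hu ↦ h u ⟨0, W.zero_mem, u, hu, zero_add u⟩⟩
  · rintro ⟨h, h'⟩ _ ⟨u, hu, u', hu', rfl⟩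
    rw [map_add, h u hu, h' u' hu', add_zero]

lemma finrank_add_finrank_oOrtho [FiniteDimensional ℝ V] {ω : V →ₗ[ℝ] V →ₗ[ℝ] ℝ}
    (hω : ω.SeparatingRight) (W : Submodule ℝ V) :
    finrank ℝ W + finrank ℝ (oOrtho ω W) = finrank ℝ V := by
  have h := LinearMap.BilinForm.finrank_add_finrank_orthogonal' (B := ω.flip) W
  rwa [LinearMap.separatingRight_iff_flip_ker_eq_bot.mp hω, inf_bot_eq, finrank_bot,
    add_zero] at h

lemma two_mul_finrank_eq_of_eq_oOrtho [FiniteDimensional ℝ V] {ω : V →ₗ[ℝ] V →ₗ[ℝ] ℝ}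
    (hω : ω.SeparatingRight) {W : Submodule ℝ V} (hW : W = oOrtho ω W) :
    2 * finrank ℝ W = finrank ℝ V := by
  have h := finrank_add_finrank_oOrtho hω W
  rw [← hW] at h
  omega

lemma eq_oOrtho_of_le_of_finrank_le [FiniteDimensional ℝ V] {ω : V →ₗ[ℝ] V →ₗ[ℝ] ℝ}
    (hω : ω.SeparatingRight) {W : Submodule ℝ V} (hle : W ≤ oOrtho ω W)
    (hdim : finrank ℝ V ≤ 2 * finrank ℝ W) : W = oOrtho ω W := by
  have h := finrank_add_finrank_oOrtho hω W
  exact Submodule.eq_of_le_of_finrank_le hle (by omega)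

end Orthogonal

section ProdForm

variable {X Y : Type*} [AddCommGroup X] [Module ℝ X] [AddCommGroup Y] [Module ℝ Y]

@[simp]
lemma prodForm_apply (ωX : X →ₗ[ℝ] X →ₗ[ℝ] ℝ) (ωY : Y →ₗ[ℝ] Y →ₗ[ℝ] ℝ) (p q : X × Y) :
    prodForm ωX ωY p q = ωX p.1 q.1 - ωY p.2 q.2 :=
  rfl

lemma prodForm_separatingRight {ωX : X →ₗ[ℝ] X →ₗ[ℝ] ℝ} {ωY : Y →ₗ[ℝ] Y →ₗ[ℝ] ℝ}
    (hX : ωX.SeparatingRight) (hY : ωY.SeparatingRight) :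
    (prodForm ωX ωY).SeparatingRight := by
  rintro ⟨x, y⟩ h
  refine Prod.ext (hX x fun x' ↦ ?_) (hY y fun y' ↦ ?_)
  · simpa using h (x', 0)
  · simpa using h (0, y')

lemma oOrtho_map_snd (ωX : X →ₗ[ℝ] X →ₗ[ℝ] ℝ) (ωY : Y →ₗ[ℝ] Y →ₗ[ℝ] ℝ)
    (L : Submodule ℝ (X × Y)) :
    oOrtho ωY (L.map (LinearMap.snd ℝ X Y)) =
      (oOrtho (prodForm ωX ωY) L).comap (LinearMap.inr ℝ X Y) := by
  ext y
  simpa using forall_comm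

lemma oOrtho_map_fst (ωX : X →ₗ[ℝ] X →ₗ[ℝ] ℝ) (ωY : Y →ₗ[ℝ] Y →ₗ[ℝ] ℝ)
    (L : Submodule ℝ (X × Y)) :
    oOrtho ωX (L.map (LinearMap.fst ℝ X Y)) =
      (oOrtho (prodForm ωX ωY) L).comap (LinearMap.inl ℝ X Y) := by
  ext x
  simp

end ProdForm

section Composition

variable {X Y Z : Type*} [AddCommGroup X] [Module ℝ X] [AddCommGroup Y] [Module ℝ Y]
  [AddCommGroup Z] [Module ℝ Z]

lemma relComp_le_oOrtho {ωX : X →ₗ[ℝ] X →ₗ[ℝ] ℝ} {ωY : Y →ₗ[ℝ] Y →ₗ[ℝ] ℝ}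
    {ωZ : Z →ₗ[ℝ] Z →ₗ[ℝ] ℝ} {L₁ : Submodule ℝ (X × Y)} {L₂ : Submodule ℝ (Y × Z)}
    (h₁ : L₁ ≤ oOrtho (prodForm ωX ωY) L₁) (h₂ : L₂ ≤ oOrtho (prodForm ωY ωZ) L₂) :
    relComp L₂ L₁ ≤ oOrtho (prodForm ωX ωZ) (relComp L₂ L₁) := by
  rintro ⟨x, z⟩ ⟨y, hxy, hyz⟩ ⟨x', z'⟩ ⟨y', hxy', hyz'⟩
  have e₁ : ωX x x' - ωY y y' = 0 := h₁ hxy (x', y') hxy'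
  have e₂ : ωY y y' - ωZ z z' = 0 := h₂ hyz (y', z') hyz'
  show ωX x x' - ωZ z z' = 0
  linarith

lemma map_coprod_snd_neg_fst (L₁ : Submodule ℝ (X × Y)) (L₂ : Submodule ℝ (Y × Z)) :
    (L₁.prod L₂).map ((LinearMap.snd ℝ X Y).coprod (-LinearMap.fst ℝ Y Z)) =
      L₁.map (LinearMap.snd ℝ X Y) ⊔ L₂.map (LinearMap.fst ℝ Y Z) := by
  rw [LinearMap.map_coprod_prod, Submodule.map_neg]

lemma relComp_eq_map (L₁ : Submodule ℝ (X × Y)) (L₂ : Submodule ℝ (Y × Z)) :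
    relComp L₂ L₁ = (L₁.prod L₂ ⊓ LinearMap.ker
        ((LinearMap.snd ℝ X Y).coprod (-LinearMap.fst ℝ Y Z))).map
      ((LinearMap.fst ℝ X Y).prodMap (LinearMap.snd ℝ Y Z)) := by
  ext ⟨x, z⟩
  constructor
  · rintro ⟨y, hxy, hyz⟩
    exact ⟨((x, y), (y, z)), ⟨⟨hxy, hyz⟩, by simp⟩, rfl⟩
  · rintro ⟨⟨⟨x', y⟩, ⟨y', z'⟩⟩, ⟨⟨hxy, hyz⟩, hy⟩, h⟩
    obtain rfl : y = y' := by simpa [← sub_eq_add_neg, sub_eq_zero] using hy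
    obtain ⟨rfl, rfl⟩ : x' = x ∧ z' = z := by simpa using h
    exact ⟨y, hxy, hyz⟩

lemma inf_ker_eq_map (L₁ : Submodule ℝ (X × Y)) (L₂ : Submodule ℝ (Y × Z)) :
    L₁.prod L₂ ⊓ LinearMap.ker ((LinearMap.snd ℝ X Y).coprod (-LinearMap.fst ℝ Y Z)) ⊓
        LinearMap.ker ((LinearMap.fst ℝ X Y).prodMap (LinearMap.snd ℝ Y Z)) =
      (L₁.comap (LinearMap.inr ℝ X Y) ⊓ L₂.comap (LinearMap.inl ℝ Y Z)).map
        ((LinearMap.inr ℝ X Y).prod (LinearMap.inl ℝ Y Z)) := by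
  ext w
  simp only [mem_inf, mem_prod, LinearMap.mem_ker, mem_map, mem_comap]
  constructor
  · obtain ⟨⟨x, y⟩, ⟨y', z⟩⟩ := w
    rintro ⟨⟨⟨hxy, hyz⟩, hy⟩, hxz⟩
    obtain rfl : y = y' := by simpa [← sub_eq_add_neg, sub_eq_zero] using hy
    obtain ⟨rfl, rfl⟩ : x = 0 ∧ z = 0 := by simpa using hxz
    exact ⟨y, ⟨hxy, hyz⟩, rfl⟩
  · rintro ⟨y, ⟨hy₁, hy₂⟩, rfl⟩
    simpa using ⟨hy₁, hy₂⟩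

lemma finrank_relComp_add [FiniteDimensional ℝ X] [FiniteDimensional ℝ Y] [FiniteDimensional ℝ Z]
    (L₁ : Submodule ℝ (X × Y)) (L₂ : Submodule ℝ (Y × Z)) :
    finrank ℝ (relComp L₂ L₁) +
        finrank ℝ (L₁.comap (LinearMap.inr ℝ X Y) ⊓ L₂.comap (LinearMap.inl ℝ Y Z) :
          Submodule ℝ Y) +
        finrank ℝ (L₁.map (LinearMap.snd ℝ X Y) ⊔ L₂.map (LinearMap.fst ℝ Y Z) :
          Submodule ℝ Y) =
      finrank ℝ L₁ + finrank ℝ L₂ := by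
  set Φ := (LinearMap.snd ℝ X Y).coprod (-LinearMap.fst ℝ Y Z)
  set π := (LinearMap.fst ℝ X Y).prodMap (LinearMap.snd ℝ Y Z)
  set j := (LinearMap.inr ℝ X Y).prod (LinearMap.inl ℝ Y Z)
  have hj : Function.Injective j := fun y y' h ↦ congrArg (fun w ↦ w.1.2) h
  have hΦ := finrank_map_add_finrank_inf_ker Φ (L₁.prod L₂)
  have hπ := finrank_map_add_finrank_inf_ker π (L₁.prod L₂ ⊓ LinearMap.ker Φ)
  rw [map_coprod_snd_neg_fst, finrank_submodule_prod] at hΦ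
  rw [← relComp_eq_map, inf_ker_eq_map, ← (Submodule.equivMapOfInjective j hj _).finrank_eq] at hπ
  omega

end Composition

theorem stmt10_general
    {X Y Z : Type*} [AddCommGroup X] [Module ℝ X] [FiniteDimensional ℝ X]
    [AddCommGroup Y] [Module ℝ Y] [FiniteDimensional ℝ Y]
    [AddCommGroup Z] [Module ℝ Z] [FiniteDimensional ℝ Z]
    (ωX : X →ₗ[ℝ] X →ₗ[ℝ] ℝ) (hXnd : ωX.Nondegenerate)
    (ωY : Y →ₗ[ℝ] Y →ₗ[ℝ] ℝ) (hYnd : ωY.Nondegenerate)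
    (ωZ : Z →ₗ[ℝ] Z →ₗ[ℝ] ℝ) (hZnd : ωZ.Nondegenerate)
    (L₁ : Submodule ℝ (X × Y)) (hL₁ : L₁ = oOrtho (prodForm ωX ωY) L₁)
    (L₂ : Submodule ℝ (Y × Z)) (hL₂ : L₂ = oOrtho (prodForm ωY ωZ) L₂) :
    relComp L₂ L₁ = oOrtho (prodForm ωX ωZ) (relComp L₂ L₁) := by
  have hdim₁ := two_mul_finrank_eq_of_eq_oOrtho (prodForm_separatingRight hXnd.2 hYnd.2) hL₁
  have hdim₂ := two_mul_finrank_eq_of_eq_oOrtho (prodForm_separatingRight hYnd.2 hZnd.2) hL₂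
  have hdimR := finrank_relComp_add L₁ L₂
  set S := L₁.map (LinearMap.snd ℝ X Y) ⊔ L₂.map (LinearMap.fst ℝ Y Z)
  have hK : L₁.comap (LinearMap.inr ℝ X Y) ⊓ L₂.comap (LinearMap.inl ℝ Y Z) = oOrtho ωY S := by
    rw [oOrtho_sup, oOrtho_map_snd ωX, oOrtho_map_fst ωY ωZ, ← hL₁, ← hL₂]
  have hdimY := finrank_add_finrank_oOrtho hYnd.2 S
  rw [hK] at hdimR
  rw [Module.finrank_prod] at hdim₁ hdim₂
  refine eq_oOrtho_of_le_of_finrank_le (prodForm_separatingRight hXnd.2 hZnd.2)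
    (relComp_le_oOrtho hL₁.le hL₂.le) ?_
  rw [Module.finrank_prod]
  omega

/-- the composition of linear canonical relations is a linear canonical
relation. -/
theorem stmt10
    {X Y Z : Type*} [AddCommGroup X] [Module ℝ X] [FiniteDimensional ℝ X]
    [AddCommGroup Y] [Module ℝ Y] [FiniteDimensional ℝ Y]
    [AddCommGroup Z] [Module ℝ Z] [FiniteDimensional ℝ Z]
    (ωX : X →ₗ[ℝ] X →ₗ[ℝ] ℝ) (hXalt : ωX.IsAlt) (hXnd : ωX.Nondegenerate)
    (ωY : Y →ₗ[ℝ] Y →ₗ[ℝ] ℝ) (hYalt : ωY.IsAlt) (hYnd : ωY.Nondegenerate)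
    (ωZ : Z →ₗ[ℝ] Z →ₗ[ℝ] ℝ) (hZalt : ωZ.IsAlt) (hZnd : ωZ.Nondegenerate)
    (L₁ : Submodule ℝ (X × Y)) (hL₁ : L₁ = oOrtho (prodForm ωX ωY) L₁)
    (L₂ : Submodule ℝ (Y × Z)) (hL₂ : L₂ = oOrtho (prodForm ωY ωZ) L₂) :
    relComp L₂ L₁ = oOrtho (prodForm ωX ωZ) (relComp L₂ L₁) :=
  stmt10_general ωX hXnd ωY hYnd ωZ hZnd L₁ hL₁ L₂ hL₂
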